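/- Let 0 < α < 1. There exist constants C > 0, D > 0 and M₀ ≥ 1, depending only on α, such that for all integers M ≥ M₀ and all real u ≥ D: u³ ∫_0^{M^α} ⌊t^{1/α}⌋ / (t²(t² + u² + ut√2)) dt ≥ C u · (min(M^α, u))^{1/α − 1}. -/
import Mathlib

open MeasureTheory Set intervalIntegral

private lemma rpow_aux_calc (t u m p : ℝ) (hu : u ≠ 0) :
    u ^ 3 * ((m/2) * (t * p / (8 * u ^ 2))) = t * u * p * m / 16 := by
  field_simp
  ring

set_option maxHeartbeats 1000000 in
theorem lower_bound_integral_alpha (α : ℝ) (h1 : 0 < α) (h2 : α < 1) :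
    ∃ C : ℝ, 0 < C ∧ ∃ D : ℝ, 0 < D ∧ ∃ M₀ : ℕ, 1 ≤ M₀ ∧
      ∀ M : ℕ, M₀ ≤ M → ∀ u : ℝ, D ≤ u →
        C * u * (min ((M : ℝ) ^ α) u) ^ (1 / α - 1) ≤
          u ^ 3 * ∫ x in (0 : ℝ)..((M : ℝ) ^ α),
            ((⌊x ^ (1 / α)⌋ : ℤ) : ℝ) /
              (x ^ 2 * (x ^ 2 + u ^ 2 + u * x * Real.sqrt 2)) := by
  have hα0 : α ≠ 0 := ne_of_gt h1
  have hαinv : 0 < 1 / α := by positivity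
  refine ⟨(2:ℝ) ^ (-(1/α)) / 32, by positivity, (2:ℝ) ^ (α+1), by positivity,
    ⌈(2:ℝ) ^ (1/α+1)⌉₊ + 1, Nat.le_add_left 1 _, ?_⟩
  intro M hM u hu
  set f : ℝ → ℝ := fun x =>
    ((⌊x ^ (1 / α)⌋ : ℤ) : ℝ) / (x ^ 2 * (x ^ 2 + u ^ 2 + u * x * Real.sqrt 2)) with hf_def
  set T : ℝ := (M:ℝ) ^ α with hT_def
  set m : ℝ := min T u with hm_def
  set t : ℝ := (2:ℝ) ^ (-(1/α)) with ht_def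
  have ht0 : 0 < t := Real.rpow_pos_of_pos two_pos _
  have hsqrt2 : Real.sqrt 2 ≤ 2 := by
    nlinarith [Real.sq_sqrt (by norm_num : (0:ℝ) ≤ 2), Real.sqrt_nonneg 2]
  have hu0 : 0 < u := lt_of_lt_of_le (by positivity) hu
  have h2pow : (2:ℝ) ≤ (2:ℝ) ^ (α+1) := by
    have : (2:ℝ) ^ (1:ℝ) ≤ (2:ℝ) ^ (α+1) :=
      Real.rpow_le_rpow_of_exponent_le one_le_two (by linarith)
    rwa [Real.rpow_one] at this
  have hu2 : 2 ≤ u := h2pow.trans hu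
  -- M^α ≥ 2^(α+1)
  have hMv : (2:ℝ) ^ (1/α+1) ≤ (M:ℝ) := by
    have h1' : ((⌈(2:ℝ) ^ (1/α+1)⌉₊ + 1 : ℕ) : ℝ) ≤ (M:ℝ) := Nat.cast_le.mpr hM
    have h2' : (2:ℝ) ^ (1/α+1) ≤ (⌈(2:ℝ) ^ (1/α+1)⌉₊ : ℝ) := Nat.le_ceil _
    push_cast at h1'
    linarith
  have hMα : (2:ℝ) ^ (α+1) ≤ T := by
    have h := Real.rpow_le_rpow (by positivity) hMv h1.le
    rw [← Real.rpow_mul (by norm_num : (0:ℝ) ≤ 2)] at h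
    have he : (1/α+1) * α = α + 1 := by field_simp; ring
    rwa [he] at h
  have hm : (2:ℝ) ^ (α+1) ≤ m := le_min hMα hu
  have hm2 : 2 ≤ m := h2pow.trans hm
  have hm0 : (0:ℝ) < m := by linarith
  have hT0 : (0:ℝ) ≤ T := Real.rpow_nonneg (Nat.cast_nonneg M) α
  have hmT : m ≤ T := min_le_left _ _
  have hmu : m ≤ u := min_le_right _ _
  have ha : (2:ℝ) ^ α ≤ m / 2 := by
    have : (2:ℝ) ^ (α+1) = 2 ^ α * 2 := by
      rw [Real.rpow_add two_pos, Real.rpow_one]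
    linarith [this ▸ hm]
  have ha1 : (1:ℝ) ≤ (2:ℝ) ^ α := Real.one_le_rpow one_le_two h1.le
  have ha0 : (1:ℝ) ≤ m / 2 := ha1.trans ha
  -- pointwise nonnegativity
  have hf_nonneg : ∀ x : ℝ, 0 ≤ x → 0 ≤ f x := by
    intro x hx
    apply div_nonneg
    · exact_mod_cast Int.floor_nonneg.mpr (Real.rpow_nonneg hx _)
    · exact mul_nonneg (sq_nonneg x)
        (add_nonneg (add_nonneg (sq_nonneg x) (sq_nonneg u))
          (mul_nonneg (mul_nonneg hu0.le hx) (Real.sqrt_nonneg 2)))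
  have hf_ae : 0 ≤ᵐ[volume.restrict (Ioc (0:ℝ) T)] f := by
    rw [Filter.EventuallyLE, ae_restrict_iff' measurableSet_Ioc]
    exact Filter.Eventually.of_forall fun x hx => hf_nonneg x hx.1.le
  -- measurability
  have hfm : Measurable f := by
    apply Measurable.div
    · exact measurable_from_top.comp
        (Int.measurable_floor.comp (measurable_id.pow_const (1/α)))
    · fun_prop
  -- integrability on [0, T]
  have hInt : IntervalIntegrable f volume 0 T := by
    rw [intervalIntegrable_iff_integrableOn_Ioc_of_le hT0]
    apply Measure.integrableOn_of_bounded (M := (M:ℝ)) measure_Ioc_lt_top.ne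
      hfm.aestronglyMeasurable
    rw [ae_restrict_iff' measurableSet_Ioc]
    refine Filter.Eventually.of_forall fun x hx => ?_
    have hx0 : 0 < x := hx.1
    have hxT : x ≤ T := hx.2
    rw [Real.norm_eq_abs, abs_of_nonneg (hf_nonneg x hx0.le)]
    have hM1 : (1:ℝ) ≤ (M:ℝ) := by
      have : (1:ℝ) ≤ (2:ℝ) ^ (1/α+1) := Real.one_le_rpow one_le_two (by positivity)
      linarith
    rcases lt_or_ge x 1 with hx1 | hx1
    · have : ⌊x ^ (1/α)⌋ = 0 := Int.floor_eq_zero_iff.mpr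
        ⟨Real.rpow_nonneg hx0.le _, Real.rpow_lt_one hx0.le hx1 hαinv⟩
      simp only [hf_def, this, Int.cast_zero, zero_div]
      linarith
    · have hN : ((⌊x ^ (1/α)⌋ : ℤ) : ℝ) ≤ (M:ℝ) := by
        have h1'' : x ^ (1/α) ≤ T ^ (1/α) := Real.rpow_le_rpow hx0.le hxT hαinv.le
        have h2'' : T ^ (1/α) = (M:ℝ) := by
          rw [hT_def, ← Real.rpow_mul (Nat.cast_nonneg M)]
          rw [show α * (1/α) = 1 by field_simp, Real.rpow_one]
        exact (Int.floor_le _).trans (h2'' ▸ h1'')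
      have hD1 : (1:ℝ) ≤ x ^ 2 * (x ^ 2 + u ^ 2 + u * x * Real.sqrt 2) := by
        have hxx : (1:ℝ) ≤ x ^ 2 := by nlinarith
        have hbr : (1:ℝ) ≤ x ^ 2 + u ^ 2 + u * x * Real.sqrt 2 := by
          nlinarith [mul_nonneg (mul_nonneg hu0.le hx0.le) (Real.sqrt_nonneg 2)]
        calc (1:ℝ) = 1 * 1 := by ring
          _ ≤ _ := mul_le_mul hxx hbr one_pos.le (by positivity)
      have hNn : (0:ℝ) ≤ ((⌊x ^ (1/α)⌋ : ℤ) : ℝ) := by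
        exact_mod_cast Int.floor_nonneg.mpr (Real.rpow_nonneg hx0.le _)
      calc f x ≤ ((⌊x ^ (1/α)⌋ : ℤ) : ℝ) := div_le_self hNn hD1
        _ ≤ (M:ℝ) := hN
  have hsub : IntervalIntegrable f volume (m/2) m := by
    apply hInt.mono_set
    rw [Set.uIcc_of_le (by linarith : m/2 ≤ m), Set.uIcc_of_le hT0]
    exact Icc_subset_Icc (by linarith) hmT
  -- the constant lower bound on [m/2, m]
  set c : ℝ := t * m ^ (1/α - 2) / (8 * u ^ 2) with hc_def
  have hkey : ∀ x ∈ Icc (m/2) m, c ≤ f x := by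
    intro x hx
    obtain ⟨hx1, hx2⟩ := hx
    have hx0 : 0 < x := by linarith
    have hxu : x ≤ u := hx2.trans hmu
    have hy2 : 2 ≤ x ^ (1/α) := by
      have h := Real.rpow_le_rpow (by positivity) (ha.trans hx1) hαinv.le
      rw [← Real.rpow_mul (by norm_num : (0:ℝ) ≤ 2),
        show α * (1/α) = 1 by field_simp, Real.rpow_one] at h
      exact h
    have hfloor : x ^ (1/α) / 2 ≤ ((⌊x ^ (1/α)⌋ : ℤ) : ℝ) := by
      have := Int.sub_one_lt_floor (x ^ (1/α))
      linarith
    have hxlow : m ^ (1/α) * t / 2 ≤ ((⌊x ^ (1/α)⌋ : ℤ) : ℝ) := by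
      have h1'' : (m/2) ^ (1/α) ≤ x ^ (1/α) :=
        Real.rpow_le_rpow (by linarith) hx1 hαinv.le
      have h2'' : (m/2) ^ (1/α) = m ^ (1/α) * t := by
        rw [div_eq_mul_inv, Real.mul_rpow hm0.le (by norm_num),
          ht_def, ← Real.rpow_neg_one 2, ← Real.rpow_mul (by norm_num : (0:ℝ) ≤ 2)]
        norm_num
      rw [h2''] at h1''
      linarith
    have hS : x ^ 2 + u ^ 2 + u * x * Real.sqrt 2 ≤ 4 * u ^ 2 := by
      have e1 : u * x * Real.sqrt 2 ≤ u * x * 2 :=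
        mul_le_mul_of_nonneg_left hsqrt2 (mul_nonneg hu0.le hx0.le)
      have e2 : u * x ≤ u * u := mul_le_mul_of_nonneg_left hxu hu0.le
      have e3 : x ^ 2 ≤ u ^ 2 := pow_le_pow_left₀ hx0.le hxu 2
      have e4 : u * u = u ^ 2 := (sq u).symm
      linarith
    have hDd : x ^ 2 * (x ^ 2 + u ^ 2 + u * x * Real.sqrt 2) ≤ m ^ 2 * (4 * u ^ 2) :=
      mul_le_mul (pow_le_pow_left₀ hx0.le hx2 2) hS
        (add_nonneg (add_nonneg (sq_nonneg x) (sq_nonneg u))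
          (mul_nonneg (mul_nonneg hu0.le hx0.le) (Real.sqrt_nonneg 2)))
        (sq_nonneg m)
    have hDpos : 0 < x ^ 2 * (x ^ 2 + u ^ 2 + u * x * Real.sqrt 2) := by
      apply mul_pos (pow_pos hx0 2)
      linarith [sq_nonneg x, pow_pos hu0 2,
        mul_nonneg (mul_nonneg hu0.le hx0.le) (Real.sqrt_nonneg 2)]
    have hNn : (0:ℝ) ≤ ((⌊x ^ (1/α)⌋ : ℤ) : ℝ) := by
      exact_mod_cast Int.floor_nonneg.mpr (Real.rpow_nonneg hx0.le _)
    have hc_eq : c = (m ^ (1/α) * t / 2) / (m ^ 2 * (4 * u ^ 2)) := by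
      rw [hc_def, Real.rpow_sub hm0,
        show m ^ (2:ℝ) = m ^ 2 by rw [show (2:ℝ) = ((2:ℕ):ℝ) by norm_num, Real.rpow_natCast]]
      field_simp
      ring
    rw [hc_eq]
    exact div_le_div₀ hNn hxlow hDpos hDd
  -- compare the integrals
  have hconst : (m/2) * c ≤ ∫ x in (m/2)..m, f x := by
    have h := intervalIntegral.integral_mono_on (by linarith : m/2 ≤ m)
      (_root_.intervalIntegrable_const (c := c)) hsub hkey
    rw [intervalIntegral.integral_const, smul_eq_mul] at h
    calc (m/2) * c = (m - m/2) * c := by ring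
      _ ≤ _ := h
  have hmono : (∫ x in (m/2)..m, f x) ≤ ∫ x in (0:ℝ)..T, f x :=
    intervalIntegral.integral_mono_interval (by linarith) (by linarith) hmT hf_ae hInt
  have hu3 : (0:ℝ) ≤ u ^ 3 := by positivity
  clear_value f T m t
  have hfinal : t / 32 * u * m ^ (1/α - 1) ≤ u ^ 3 * ((m/2) * c) := by
    have hmm : m ^ (1/α - 1) = m ^ (1/α - 2) * m := by
      rw [show 1/α - 1 = (1/α - 2) + 1 by ring, Real.rpow_add_one hm0.ne']
    have hmp : 0 < m ^ (1/α - 2) := Real.rpow_pos_of_pos hm0 _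
    have hA : 0 < t * u * m ^ (1/α - 2) * m :=
      mul_pos (mul_pos (mul_pos ht0 hu0) hmp) hm0
    have e1 : t / 32 * u * (m ^ (1/α - 2) * m) = t * u * m ^ (1/α - 2) * m / 32 := by ring
    have e2 : u ^ 3 * ((m/2) * c) = t * u * m ^ (1/α - 2) * m / 16 := by
      rw [hc_def]; exact rpow_aux_calc t u m _ hu0.ne'
    rw [hmm, e1, e2]
    linarith
  calc t / 32 * u * m ^ (1/α - 1) ≤ u ^ 3 * ((m/2) * c) := hfinal
    _ ≤ u ^ 3 * ∫ x in (m/2)..m, f x := by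
        exact mul_le_mul_of_nonneg_left hconst hu3
    _ ≤ u ^ 3 * ∫ x in (0:ℝ)..T, f x := mul_le_mul_of_nonneg_left hmono hu3
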